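/- arXiv:2311.05066 — 2 statements merged into one kernel-verified Lean document; each statement's English description precedes it below -/
import Mathlib

section
/- Let c, p, q be positive integers. Let G be a graph, let x, y be distinct non-adjacent vertices of G, and let P_0 be a collection of c(p+1)q pairwise internally disjoint induced paths in G from x to y. Let W_0 be an x-slash for P_0 in G. Then either (a) there exist P ⊆ P_0 with |P| = p and a subpath W of W_0 such that W is an x-slash for P in G and there is no induced path of length at most c+1 from x to y within V(P) ∪ V(W); or (b) there exists a collection Q of q pairwise internally disjoint paths in G from x to y, each of length at most c+1. -/
/-- `l` is the vertex sequence of an induced path in `G`. -/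
def IsPathList {V : Type} (G : SimpleGraph V) (l : List V) : Prop :=
  l ≠ [] ∧ l.Nodup ∧ ∀ i j : Fin l.length,
    (G.Adj (l.get i) (l.get j) ↔ (i.1 + 1 = j.1 ∨ j.1 + 1 = i.1))

/-- `p` is an induced path in `G` from `x` to `y`. -/
def IsXYPath {V : Type} (G : SimpleGraph V) (x y : V) (p : List V) : Prop :=
  IsPathList G p ∧ p.head? = some x ∧ p.getLast? = some y

/-- `w` is an `x`-slash for the collection `P` of paths from `x` to `y`:
an induced path avoiding `x` and `y` that contains the (unique) neighbor of
`x` on each path of `P`. -/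
def XSlash {V : Type} (G : SimpleGraph V) (x y : V)
    (P : Finset (List V)) (w : List V) : Prop :=
  IsPathList G w ∧ x ∉ w ∧ y ∉ w ∧
  ∀ p ∈ P, ∀ v ∈ p, G.Adj x v → v ∈ w

/-!
If alternative (a) fails, every choice of `p` paths of `P0` together with a subpath of `W0` that
is an `x`-slash for them carries a short `x`-`y` path. Given a set `S` of at most `c (q - 1)`
vertices other than `x`, `y`, at most `|S|` paths of `P0` meet `S`. Index the others by the position
of their neighbour of `x` on `W0` and group them by how many vertices of `S` precede that position
on `W0`; some group has `p` paths, and the subpath of `W0` they span contains no vertex of `S`.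
Hence there is a short path avoiding `S`. Letting `S` be the union of the interiors (at most `c`
vertices each) of the short paths found so far yields `q` internally disjoint short paths.
-/

section

variable {V : Type} {G : SimpleGraph V} {x y : V}

def InternallyDisjoint (x y : V) (l l' : List V) : Prop :=
  ∀ v ∈ l, v ∈ l' → v = x ∨ v = y

namespace IsPathList

theorem adj_getElem_iff {l : List V} (h : IsPathList G l) {i j : ℕ} (hi : i < l.length)
    (hj : j < l.length) : G.Adj l[i] l[j] ↔ i + 1 = j ∨ j + 1 = i := by
  simpa using h.2.2 ⟨i, hi⟩ ⟨j, hj⟩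

theorem of_infix {l w : List V} (h : IsPathList G l) (hw : w <:+: l) (hne : w ≠ []) :
    IsPathList G w := by
  refine ⟨hne, hw.sublist.nodup h.2.1, fun i j => ?_⟩
  obtain ⟨s, t, rfl⟩ := hw
  have key : ∀ k : Fin w.length,
      w.get k = (s ++ w ++ t)[s.length + k]'(by simp; omega) := fun k => by
    simp [List.getElem_append_right, List.getElem_append_left]
  rw [key, key, h.adj_getElem_iff]
  omega

end IsPathList

namespace IsXYPath

variable {l : List V}

theorem left_mem (h : IsXYPath G x y l) : x ∈ l := List.mem_of_mem_head? h.2.1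

theorem right_mem (h : IsXYPath G x y l) : y ∈ l := List.mem_of_mem_getLast? h.2.2

theorem exists_unique_adj_left (h : IsXYPath G x y l) (hxy : x ≠ y) (hnadj : ¬ G.Adj x y) :
    ∃ v ∈ l, v ≠ x ∧ v ≠ y ∧ G.Adj x v ∧ ∀ u ∈ l, G.Adj x u → u = v := by
  obtain ⟨hpath, hhead, hlast⟩ := h
  rw [List.head?_eq_getElem?, List.getElem?_eq_some_iff] at hhead
  rw [List.getLast?_eq_getElem?, List.getElem?_eq_some_iff] at hlast
  obtain ⟨h0, hx⟩ := hhead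
  obtain ⟨hn, hy⟩ := hlast
  have hlen : 3 ≤ l.length := by
    by_contra!
    obtain h1 | h2 : l.length = 1 ∨ l.length = 2 := by omega
    · exact hxy (by simpa [h1, hx] using hy)
    · have hadj := (hpath.adj_getElem_iff h0 (by omega : 1 < l.length)).2 (by omega)
      simp only [h2, Nat.add_one_sub_one] at hy
      exact hnadj (by rwa [hx, hy] at hadj)
  refine ⟨l[1], List.getElem_mem _, ?_, ?_, ?_, ?_⟩
  · rw [← hx]; exact fun e => by simpa using hpath.2.1.getElem_inj_iff.1 e
  · rw [← hy]; exact fun e => by have := hpath.2.1.getElem_inj_iff.1 e; omega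
  · rw [← hx]; exact (hpath.adj_getElem_iff _ _).2 (by omega)
  · intro u hu hadj
    obtain ⟨i, hi, rfl⟩ := List.getElem_of_mem hu
    rw [← hx, hpath.adj_getElem_iff] at hadj
    simp only [show i = 1 by omega]

theorem card_toFinset_sdiff_le [DecidableEq V] (h : IsXYPath G x y l) (hxy : x ≠ y) :
    (l.toFinset \ {x, y}).card ≤ l.length - 2 := by
  have hsub : ({x, y} : Finset V) ⊆ l.toFinset := by
    simp [Finset.insert_subset_iff, h.left_mem, h.right_mem]
  rw [Finset.card_sdiff_of_subset hsub, Finset.card_pair hxy]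
  exact Nat.sub_le_sub_right l.toFinset_card_le 2

end IsXYPath

namespace List

variable {α : Type*}

theorem extract_infix (l : List α) (a b : ℕ) : l.extract a b <:+: l := by
  rw [List.extract_eq_take_drop]
  exact (List.take_prefix _ _).isInfix.trans (List.drop_suffix _ _).isInfix

theorem mem_extract_iff {l : List α} {a b : ℕ} {v : α} :
    v ∈ l.extract a b ↔ ∃ (j : ℕ) (hj : j < l.length), a ≤ j ∧ j < b ∧ l[j] = v := by
  simp only [List.extract_eq_take_drop, List.mem_iff_getElem, List.getElem_take,
    List.getElem_drop, List.length_take, List.length_drop]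
  constructor
  · rintro ⟨i, hi, rfl⟩
    exact ⟨a + i, by omega, by omega, by omega, rfl⟩
  · rintro ⟨j, hj, haj, hjb, rfl⟩
    exact ⟨j - a, by omega, by simp only [show a + (j - a) = j by omega]⟩

theorem forall_notMem_extract_of_not_separated [DecidableEq α] {l : List α} (hl : l.Nodup)
    {S : Finset α} {a b : ℕ} (ha : a < l.length) (hb : b < l.length) (hla : l[a] ∉ S)
    (hlb : l[b] ∉ S) (hsep : ∀ j ∈ S.image l.idxOf, ¬ (a < j ∧ j < b)) :
    ∀ v ∈ l.extract a (b + 1), v ∉ S := by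
  intro v hv hvS
  obtain ⟨j, hj, haj, hjb, rfl⟩ := mem_extract_iff.1 hv
  refine hsep j (Finset.mem_image.2 ⟨_, hvS, hl.idxOf_getElem j hj⟩) ⟨?_, ?_⟩
  · exact lt_of_le_of_ne haj fun e => hla (by simpa only [e] using hvS)
  · exact lt_of_le_of_ne (Nat.le_of_lt_succ hjb) fun e => hlb (by simpa only [e] using hvS)

end List

/-- Pigeonhole on `a ↦ #{j ∈ B | j < f a}`: within one fiber, no element of `B` separates two
values of `f`. -/
theorem Finset.exists_subset_card_eq_forall_not_separated {α : Type*} (s : Finset α)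
    (f : α → ℕ) (B : Finset ℕ) {p : ℕ} (h : (B.card + 1) * p ≤ s.card) :
    ∃ T ⊆ s, T.card = p ∧
      ∀ a ∈ T, ∀ b ∈ T, ∀ j ∈ B, ¬ (f a < j ∧ j < f b) := by
  classical
  set below : α → ℕ := fun a => (B.filter (· < f a)).card
  obtain ⟨r, -, hr⟩ := Finset.exists_le_card_fiber_of_mul_le_card_of_maps_to
    (f := below) (t := Finset.range (B.card + 1))
    (fun a _ => Finset.mem_range.2 (Nat.lt_succ_of_le (Finset.card_filter_le _ _)))
    ⟨0, by simp⟩ (by simpa using h)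
  obtain ⟨T, hTs, hTcard⟩ := Finset.exists_subset_card_eq hr
  refine ⟨T, hTs.trans (Finset.filter_subset _ _), hTcard,
    fun a ha b hb j hj ⟨haj, hjb⟩ => ?_⟩
  have hlt : below a < below b := by
    refine Finset.card_lt_card ((Finset.ssubset_iff_of_subset ?_).2 ⟨j, ?_, ?_⟩)
    · intro i hi
      simp only [Finset.mem_filter] at hi ⊢
      exact ⟨hi.1, by omega⟩
    · exact Finset.mem_filter.2 ⟨hj, hjb⟩
    · simp [haj.le]
  have hra := (Finset.mem_filter.1 (hTs ha)).2
  have hrb := (Finset.mem_filter.1 (hTs hb)).2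
  omega

theorem card_le_card_filter_avoiding_add [DecidableEq V] {P : Finset (List V)}
    (hdisj : (P : Set (List V)).Pairwise (InternallyDisjoint x y)) {S : Finset V}
    (hxS : x ∉ S) (hyS : y ∉ S) :
    P.card ≤ (P.filter fun l => ∀ v ∈ l, v ∉ S).card + S.card := by
  rw [← Finset.card_filter_add_card_filter_not (fun l => ∀ v ∈ l, v ∉ S)]
  refine Nat.add_le_add_left (Finset.card_le_card_of_forall_subsingleton (fun l v => v ∈ l)
    (fun l hl => ?_) ?_) _
  · obtain ⟨v, hvl, hvS⟩ := by simpa using (Finset.mem_filter.1 hl).2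
    exact ⟨v, hvS, hvl⟩
  rintro v hvS l ⟨hl, hvl⟩ l' ⟨hl', hvl'⟩
  by_contra hne
  obtain rfl | rfl :=
    hdisj (Finset.mem_filter.1 hl).1 (Finset.mem_filter.1 hl').1 hne v hvl hvl'
  exacts [hxS hvS, hyS hvS]

theorem XSlash.of_infix {P0 P : Finset (List V)} {W0 W : List V} (hW0 : XSlash G x y P0 W0)
    (hW : W <:+: W0) (hne : W ≠ []) (hP : ∀ l ∈ P, ∀ v ∈ l, G.Adj x v → v ∈ W) :
    XSlash G x y P W :=
  ⟨hW0.1.of_infix hW hne, fun h => hW0.2.1 (hW.subset h), fun h => hW0.2.2.1 (hW.subset h), hP⟩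

theorem exists_subfamily_slash_avoiding (hxy : x ≠ y) (hnadj : ¬ G.Adj x y)
    {P0 : Finset (List V)} (hpaths : ∀ l ∈ P0, IsXYPath G x y l)
    (hdisj : (P0 : Set (List V)).Pairwise (InternallyDisjoint x y))
    {W0 : List V} (hW0 : XSlash G x y P0 W0) {S : Finset V} (hxS : x ∉ S) (hyS : y ∉ S)
    {p : ℕ} (hp : 0 < p) (hcard : (S.card + 1) * p + S.card ≤ P0.card) :
    ∃ P ⊆ P0, P.card = p ∧ ∃ W : List V, W <:+: W0 ∧ XSlash G x y P W ∧
      (∀ l ∈ P, ∀ v ∈ l, v ∉ S) ∧ ∀ v ∈ W, v ∉ S := by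
  classical
  have : Nonempty V := ⟨x⟩
  choose! nb hnb_mem _ _ hnb_adj hnb_unique using
    fun l (hl : l ∈ P0) => (hpaths l hl).exists_unique_adj_left hxy hnadj
  set idx : List V → ℕ := fun l => W0.idxOf (nb l)
  have hidx_lt : ∀ l ∈ P0, idx l < W0.length := fun l hl =>
    List.idxOf_lt_length_of_mem (hW0.2.2.2 l hl _ (hnb_mem l hl) (hnb_adj l hl))
  have hget_idx : ∀ l (hl : l ∈ P0), W0[idx l]'(hidx_lt l hl) = nb l := fun l hl =>
    List.getElem_idxOf _
  have hcount := card_le_card_filter_avoiding_add hdisj hxS hyS (P := P0)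
  set good := P0.filter fun l => ∀ v ∈ l, v ∉ S
  have hgood : (S.card + 1) * p ≤ good.card := by omega
  obtain ⟨T, hTgood, hTcard, hT⟩ := Finset.exists_subset_card_eq_forall_not_separated good idx
    (S.image W0.idxOf) (le_trans (Nat.mul_le_mul_right p (Nat.succ_le_succ Finset.card_image_le))
      hgood)
  have hTP0 : T ⊆ P0 := hTgood.trans (Finset.filter_subset _ _)
  have hTS : ∀ l ∈ T, ∀ v ∈ l, v ∉ S := fun l hl => (Finset.mem_filter.1 (hTgood hl)).2
  have hTne : T.Nonempty := Finset.card_pos.1 (hTcard ▸ hp)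
  obtain ⟨lmin, hlmin, hlmin_le⟩ := T.exists_min_image idx hTne
  obtain ⟨lmax, hlmax, hle_lmax⟩ := T.exists_max_image idx hTne
  set W := W0.extract (idx lmin) (idx lmax + 1)
  have hnbW : ∀ l ∈ T, nb l ∈ W := fun l hl => List.mem_extract_iff.2
    ⟨idx l, hidx_lt l (hTP0 hl), hlmin_le l hl, Nat.lt_succ_of_le (hle_lmax l hl),
      hget_idx l (hTP0 hl)⟩
  have hnbS : ∀ l (hl : l ∈ T), W0[idx l]'(hidx_lt l (hTP0 hl)) ∉ S := fun l hl => by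
    rw [hget_idx l (hTP0 hl)]
    exact hTS l hl _ (hnb_mem l (hTP0 hl))
  refine ⟨T, hTP0, hTcard, W, List.extract_infix _ _ _, ?_, hTS, ?_⟩
  · refine hW0.of_infix (List.extract_infix _ _ _) (List.ne_nil_of_mem (hnbW lmin hlmin)) ?_
    intro l hl v hv hadj
    rw [hnb_unique l (hTP0 hl) v hv hadj]
    exact hnbW l hl
  · exact List.forall_notMem_extract_of_not_separated hW0.1.2.1 _ _ (hnbS lmin hlmin)
      (hnbS lmax hlmax) (hT lmin hlmin lmax hlmax)

theorem exists_internallyDisjoint_short_paths (hxy : x ≠ y) (hnadj : ¬ G.Adj x y) {c N : ℕ}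
    (hshort : ∀ S : Finset V, x ∉ S → y ∉ S → S.card ≤ N →
      ∃ l, IsXYPath G x y l ∧ l.length ≤ c + 2 ∧ ∀ v ∈ l, v ∉ S) :
    ∀ (k : ℕ) (S : Finset V), x ∉ S → y ∉ S → S.card + c * k ≤ N + c →
      ∃ Q : Finset (List V), Q.card = k ∧
        (∀ l ∈ Q, IsXYPath G x y l ∧ l.length ≤ c + 2 ∧ ∀ v ∈ l, v ∉ S) ∧
        (Q : Set (List V)).Pairwise (InternallyDisjoint x y) := by
  classical
  intro k
  induction k with
  | zero => exact fun S _ _ _ => ⟨∅, rfl, by simp, by simp⟩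
  | succ k ih =>
    intro S hxS hyS hS
    obtain ⟨l, hl, hlen, hlS⟩ := hshort S hxS hyS (by rw [Nat.mul_succ] at hS; omega)
    have hunion := Finset.card_union_le S (l.toFinset \ {x, y})
    have hinterior := hl.card_toFinset_sdiff_le hxy
    set S' := S ∪ (l.toFinset \ {x, y})
    have hS' : S'.card + c * k ≤ N + c := by
      rw [Nat.mul_succ] at hS
      omega
    obtain ⟨Q, hQcard, hQ, hQdisj⟩ := ih S' (by simp [S', hxS]) (by simp [S', hyS]) hS'
    have hmeet : ∀ l' ∈ Q, InternallyDisjoint x y l l' := by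
      intro l' hl' v hv hv'
      by_contra hinner
      exact (hQ l' hl').2.2 v hv' (by
        simp only [S', Finset.mem_union, Finset.mem_sdiff, List.mem_toFinset, Finset.mem_insert,
          Finset.mem_singleton]
        tauto)
    have hlQ : l ∉ Q := by
      intro hlQ
      obtain ⟨v, hv, hvx, hvy, -⟩ := hl.exists_unique_adj_left hxy hnadj
      obtain rfl | rfl := hmeet l hlQ v hv hv
      exacts [hvx rfl, hvy rfl]
    refine ⟨insert l Q, by rw [Finset.card_insert_of_notMem hlQ, hQcard], ?_, ?_⟩
    · intro l' hl'
      obtain rfl | hl' := Finset.mem_insert.1 hl'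
      · exact ⟨hl, hlen, hlS⟩
      · exact ⟨(hQ l' hl').1, (hQ l' hl').2.1,
          fun v hv hvS => (hQ l' hl').2.2 v hv (Finset.mem_union_left _ hvS)⟩
    · rw [Finset.coe_insert]
      exact hQdisj.insert fun l' hl' _ =>
        ⟨hmeet l' hl', fun v hv' hv => hmeet l' hl' v hv hv'⟩

end

theorem stmt7 (c p q : ℕ) (hc : 0 < c) (hp : 0 < p) (hq : 0 < q)
    (V : Type) (G : SimpleGraph V) (x y : V) (hxy : x ≠ y) (hnadj : ¬ G.Adj x y)
    (P0 : Finset (List V)) (hcard : P0.card = c * (p + 1) * q)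
    (hpaths : ∀ P ∈ P0, IsXYPath G x y P)
    (hdisj : ∀ P ∈ P0, ∀ Q ∈ P0, P ≠ Q → ∀ v ∈ P, v ∈ Q → v = x ∨ v = y)
    (W0 : List V) (hW0 : XSlash G x y P0 W0) :
    (∃ P ⊆ P0, P.card = p ∧ ∃ W : List V, W <:+: W0 ∧ XSlash G x y P W ∧
      ¬ ∃ Q : List V, IsXYPath G x y Q ∧ Q.length ≤ c + 2 ∧
        ∀ v ∈ Q, v = x ∨ v = y ∨ (∃ p' ∈ P, v ∈ p') ∨ v ∈ W) ∨
    (∃ Q : Finset (List V), Q.card = q ∧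
      (∀ p' ∈ Q, IsXYPath G x y p' ∧ p'.length ≤ c + 2) ∧
      ∀ p' ∈ Q, ∀ p'' ∈ Q, p' ≠ p'' → ∀ v ∈ p', v ∈ p'' → v = x ∨ v = y) := by
  refine or_iff_not_imp_left.2 fun hA => ?_
  push Not at hA
  have hshort : ∀ S : Finset V, x ∉ S → y ∉ S → S.card ≤ c * (q - 1) →
      ∃ l, IsXYPath G x y l ∧ l.length ≤ c + 2 ∧ ∀ v ∈ l, v ∉ S := by
    intro S hxS hyS hS
    obtain ⟨P, hP, hPcard, W, hW, hslash, hPS, hWS⟩ :=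
      exists_subfamily_slash_avoiding hxy hnadj hpaths hdisj hW0 hxS hyS hp (by
        obtain ⟨d, rfl⟩ := Nat.exists_eq_add_one_of_ne_zero hq.ne'
        rw [hcard]
        simp only [Nat.add_sub_cancel] at hS
        nlinarith)
    obtain ⟨l, hl, hlen, hlPW⟩ := hA P hP hPcard W hW hslash
    refine ⟨l, hl, hlen, fun v hv hvS => ?_⟩
    rcases hlPW v hv with rfl | rfl | ⟨l', hl', hvl'⟩ | hvW
    exacts [hxS hvS, hyS hvS, hPS l' hl' v hvl' hvS, hWS v hvW hvS]
  obtain ⟨Q, hQcard, hQ, hQdisj⟩ := exists_internallyDisjoint_short_paths hxy hnadj hshort q ∅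
    (Finset.notMem_empty x) (Finset.notMem_empty y) (by rw [Finset.card_empty, zero_add,
      ← Nat.mul_add_one, Nat.sub_add_cancel hq])
  exact ⟨Q, hQcard, fun l hl => ⟨(hQ l hl).1, (hQ l hl).2.1⟩, hQdisj⟩
end

section
/- For all positive integers d, k there is a constant υ = υ(d,k) with the following property. Let G be a graph and let B be a d-short υ-block in G. Then every k-element subset B' of B is a d-short strong k-block in G. -/
/-- `B` is a `d`-short `k`-block in `G`. -/
def DShortBlock {V : Type} (G : SimpleGraph V) (d k : ℕ) (B : Finset V) : Prop :=
  k ≤ B.card ∧ ∀ x ∈ B, ∀ y ∈ B, x ≠ y →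
    ∃ P : Finset (List V), P.card = k ∧
      (∀ p ∈ P, IsXYPath G x y p ∧ p.length ≤ d + 1) ∧
      ∀ p ∈ P, ∀ p' ∈ P, p ≠ p' → ∀ v ∈ p, v ∈ p' → v = x ∨ v = y

/-- `B` is a `d`-short strong `k`-block in `G`: the collections of `k`
internally disjoint short paths can be chosen coherently so that the interior
of any path for one pair avoids all vertices of the paths for any other pair. -/
def DShortStrongBlock {V : Type} (G : SimpleGraph V) (d k : ℕ) (B : Finset V) : Prop :=
  k ≤ B.card ∧ ∃ P : V → V → Finset (List V),
    (∀ x ∈ B, ∀ y ∈ B, x ≠ y →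
      (P x y).card = k ∧
      (∀ p ∈ P x y, IsXYPath G x y p ∧ p.length ≤ d + 1) ∧
      ∀ p ∈ P x y, ∀ p' ∈ P x y, p ≠ p' → ∀ v ∈ p, v ∈ p' → v = x ∨ v = y) ∧
    (∀ x ∈ B, ∀ y ∈ B, ∀ x' ∈ B, ∀ y' ∈ B, x ≠ y → x' ≠ y' →
      ¬ (x = x' ∧ y = y') → ¬ (x = y' ∧ y = x') →
      ∀ p ∈ P x y, ∀ v ∈ p, v ≠ x → v ≠ y → ∀ p' ∈ P x' y', v ∉ p')

open Finset

variable {V : Type}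

def InteriorAvoids (x y : V) (p : List V) (s : Set V) : Prop :=
  ∀ v ∈ p, v ≠ x → v ≠ y → v ∉ s

theorem InteriorAvoids.mono {x y : V} {p : List V} {s t : Set V}
    (h : InteriorAvoids x y p t) (hst : s ⊆ t) : InteriorAvoids x y p s :=
  fun v hv hvx hvy hvs => h v hv hvx hvy (hst hvs)

theorem InteriorAvoids.of_endpoints_mem {x y x' y' : V} {p p' : List V} {U T : Set V}
    (hp : InteriorAvoids x y p U) (hp' : InteriorAvoids x' y' p' T) (hpT : {v | v ∈ p} ⊆ T)
    (hx' : x' ∈ U) (hy' : y' ∈ U) : InteriorAvoids x y p {v | v ∈ p'} := by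
  intro v hv hvx hvy hv'
  have hvU : v ∉ U := hp v hv hvx hvy
  exact hp' v hv' (fun h => hvU (h ▸ hx')) (fun h => hvU (h ▸ hy')) (hpT hv)

def IsShortPathFamily (G : SimpleGraph V) (d : ℕ) (x y : V) (P : Finset (List V)) : Prop :=
  (∀ p ∈ P, IsXYPath G x y p ∧ p.length ≤ d + 1) ∧
    ∀ p ∈ P, ∀ p' ∈ P, p ≠ p' → ∀ v ∈ p, v ∈ p' → v = x ∨ v = y

theorem IsShortPathFamily.mono {G : SimpleGraph V} {d : ℕ} {x y : V} {P Q : Finset (List V)}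
    (hP : IsShortPathFamily G d x y P) (hQ : Q ⊆ P) : IsShortPathFamily G d x y Q :=
  ⟨fun p hp => hP.1 p (hQ hp), fun p hp p' hp' => hP.2 p (hQ hp) p' (hQ hp')⟩

theorem card_biUnion_toFinset_le [DecidableEq V] {G : SimpleGraph V} {d : ℕ} {x y : V}
    {P : Finset (List V)} (hP : IsShortPathFamily G d x y P) :
    (P.biUnion List.toFinset).card ≤ P.card * (d + 1) :=
  card_biUnion_le_card_mul _ _ _ fun p hp => p.toFinset_card_le.trans (hP.1 p hp).2

/-- Among internally disjoint `x`–`y` paths, each vertex of `U` is an interior vertex of at most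
one, so all but `|U|` of them have interiors avoiding `U`. -/
theorem exists_subset_card_eq_interiorAvoids {x y : V} {P : Finset (List V)}
    (hP : ∀ p ∈ P, ∀ p' ∈ P, p ≠ p' → ∀ v ∈ p, v ∈ p' → v = x ∨ v = y)
    (U : Finset V) {k : ℕ} (hk : U.card + k ≤ P.card) :
    ∃ F ⊆ P, F.card = k ∧ ∀ p ∈ F, InteriorAvoids x y p U := by
  classical
  set bad := P.filter fun p => ¬ InteriorAvoids x y p U
  have hbad : bad.card ≤ U.card := by
    have hsub : bad ⊆ U.biUnion fun u => P.filter fun p => u ∈ p ∧ u ≠ x ∧ u ≠ y := by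
      intro p hp
      obtain ⟨hpP, hpU⟩ := mem_filter.1 hp
      simp only [InteriorAvoids, not_forall, not_not] at hpU
      obtain ⟨u, hup, hux, huy, huU⟩ := hpU
      exact mem_biUnion.2 ⟨u, huU, mem_filter.2 ⟨hpP, hup, hux, huy⟩⟩
    calc bad.card ≤ U.card * 1 :=
          (card_le_card hsub).trans <| card_biUnion_le_card_mul _ _ _ fun u _ =>
            card_le_one.2 fun p hp p' hp' => by
              by_contra hne
              obtain ⟨hpP, hup, hux, huy⟩ := mem_filter.1 hp
              obtain ⟨hp'P, hup', -, -⟩ := mem_filter.1 hp'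
              exact (hP p hpP p' hp'P hne u hup hup').elim hux huy
      _ = U.card := mul_one _
  have hgood : k ≤ (P.filter fun p => InteriorAvoids x y p U).card := by
    have hsplit : (P.filter fun p => InteriorAvoids x y p U).card + bad.card = P.card :=
      card_filter_add_card_filter_not _
    omega
  obtain ⟨F, hF, hFk⟩ := exists_subset_card_eq hgood
  exact ⟨F, hF.trans (filter_subset _ _), hFk, fun p hp => (mem_filter.1 (hF hp)).2⟩

theorem exists_coherent_shortPathFamilies [DecidableEq V] {G : SimpleGraph V} {d k υ : ℕ}
    (S : Finset (V × V))
    (hS : ∀ z ∈ S, ∃ P : Finset (List V), P.card = υ ∧ IsShortPathFamily G d z.1 z.2 P)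
    (U : Finset V) (hU : ∀ z ∈ S, z.1 ∈ U ∧ z.2 ∈ U)
    (hυ : U.card + k * (d + 1) * S.card + k ≤ υ) :
    ∃ f : V × V → Finset (List V),
      (∀ z ∈ S, (f z).card = k ∧ IsShortPathFamily G d z.1 z.2 (f z) ∧
        ∀ p ∈ f z, InteriorAvoids z.1 z.2 p U) ∧
      ∀ z ∈ S, ∀ z' ∈ S, z ≠ z' → ∀ p ∈ f z, ∀ p' ∈ f z',
        InteriorAvoids z.1 z.2 p {v | v ∈ p'} := by
  induction S using Finset.induction_on generalizing U with
  | empty => exact ⟨fun _ => ∅, by simp, by simp⟩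
  | insert a s ha ih =>
    rw [card_insert_of_notMem ha, mul_add, mul_one] at hυ
    obtain ⟨P, hPυ, hP⟩ := hS a (mem_insert_self a s)
    obtain ⟨F, hFP, hFk, hFU⟩ := exists_subset_card_eq_interiorAvoids hP.2 U (k := k) (by omega)
    have hF : IsShortPathFamily G d a.1 a.2 F := hP.mono hFP
    set U' := U ∪ F.biUnion List.toFinset
    have hUU' : (U : Set V) ⊆ U' := by simp [U']
    have hFU' : ∀ p ∈ F, {v | v ∈ p} ⊆ (U' : Set V) := fun p hp v hv => by
      simpa [U'] using Or.inr ⟨p, hp, hv⟩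
    have hU'card : U'.card ≤ U.card + k * (d + 1) := by
      have := card_biUnion_toFinset_le hF
      rw [hFk] at this
      exact (card_union_le _ _).trans (by omega)
    obtain ⟨f, hf, hcross⟩ := ih (fun z hz => hS z (mem_insert_of_mem hz)) U'
      (fun z hz => ⟨mem_union_left _ (hU z (mem_insert_of_mem hz)).1,
        mem_union_left _ (hU z (mem_insert_of_mem hz)).2⟩) (by omega)
    have hfa : Function.update f a F a = F := Function.update_self ..
    have hfs : ∀ z ∈ s, Function.update f a F z = f z := fun z hz =>
      Function.update_of_ne (ne_of_mem_of_not_mem hz ha) ..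
    refine ⟨Function.update f a F, ?_, ?_⟩
    · intro z hz
      rcases mem_insert.1 hz with rfl | hz
      · rw [hfa]
        exact ⟨hFk, hF, hFU⟩
      · obtain ⟨hfk, hfz, hfU'⟩ := hf z hz
        rw [hfs z hz]
        exact ⟨hfk, hfz, fun p hp => (hfU' p hp).mono hUU'⟩
    · intro z hz z' hz' hzz' p hp p' hp'
      rcases mem_insert.1 hz with hza | hz <;> rcases mem_insert.1 hz' with hz'a | hz'
      · exact absurd (hza.trans hz'a.symm) hzz'
      · rw [hza, hfa] at hp
        rw [hfs z' hz'] at hp'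
        rw [hza]
        exact (hFU p hp).of_endpoints_mem ((hf z' hz').2.2 p' hp') (hFU' p hp)
          (hU z' (mem_insert_of_mem hz')).1 (hU z' (mem_insert_of_mem hz')).2
      · rw [hfs z hz] at hp
        rw [hz'a, hfa] at hp'
        exact ((hf z hz).2.2 p hp).mono (hFU' p' hp')
      · rw [hfs z hz] at hp
        rw [hfs z' hz'] at hp'
        exact hcross z hz z' hz' hzz' p hp p' hp'

theorem stmt9_general (d k : ℕ) :
    ∃ υ : ℕ, ∀ (V : Type) (G : SimpleGraph V) (B : Finset V),
      DShortBlock G d υ B →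
      ∀ B' ⊆ B, B'.card = k → DShortStrongBlock G d k B' := by
  refine ⟨2 * k + k * (d + 1) * (k * k), fun V G B hB B' hB' hk => ?_⟩
  classical
  have hpairs : B'.offDiag.card ≤ k * k := by
    rw [offDiag_card, hk]
    exact Nat.sub_le _ _
  obtain ⟨f, hf, hcross⟩ := exists_coherent_shortPathFamilies (k := k) B'.offDiag
    (fun z hz => have ⟨hz1, hz2, hz12⟩ := mem_offDiag.1 hz; hB.2 _ (hB' hz1) _ (hB' hz2) hz12)
    B' (fun z hz => ⟨(mem_offDiag.1 hz).1, (mem_offDiag.1 hz).2.1⟩)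
    (by have := Nat.mul_le_mul_left (k * (d + 1)) hpairs; omega)
  refine ⟨hk.ge, fun x y => f (x, y), fun x hx y hy hxy => ?_, ?_⟩
  · obtain ⟨hfk, hfxy, -⟩ := hf (x, y) (mem_offDiag.2 ⟨hx, hy, hxy⟩)
    exact ⟨hfk, hfxy⟩
  · intro x hx y hy x' hx' y' hy' hxy hxy' hne _ p hp v hv hvx hvy p' hp'
    exact hcross (x, y) (mem_offDiag.2 ⟨hx, hy, hxy⟩) (x', y')
      (mem_offDiag.2 ⟨hx', hy', hxy'⟩)
      (fun h => hne (Prod.mk.inj h)) p hp p' hp' v hv hvx hvy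

theorem stmt9 (d k : ℕ) (hd : 0 < d) (hk : 0 < k) :
    ∃ υ : ℕ, ∀ (V : Type) (G : SimpleGraph V) (B : Finset V),
      DShortBlock G d υ B →
      ∀ B' ⊆ B, B'.card = k → DShortStrongBlock G d k B' :=
  stmt9_general d k
end
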